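/- With C the discrete curl and D the discrete divergence defined by the Kronecker-product formulas on a structured tensor grid, one has D · C = 0, i.e., the discrete divergence of a discrete curl vanishes. -/
import Mathlib


open Kronecker

/-- The one-dimensional difference (incidence) matrix `G_n` with rows `(-1, 1)`. -/
noncomputable def diffMx (n : ℕ) : Matrix (Fin n) (Fin (n + 1)) ℝ :=
  Matrix.of fun i j => if j = i.castSucc then -1 else if j = i.succ then 1 else 0

/-- The discrete curl on a structured tensor grid, given by the `3 × 3` block
Kronecker-product matrix of the paper. -/
noncomputable def discreteCurl (n1 n2 n3 : ℕ) :
    Matrix ((Fin n3 × Fin n2 × Fin (n1 + 1)) ⊕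
            ((Fin n3 × Fin (n2 + 1) × Fin n1) ⊕
             (Fin (n3 + 1) × Fin n2 × Fin n1)))
      ((Fin (n3 + 1) × Fin (n2 + 1) × Fin n1) ⊕
       ((Fin (n3 + 1) × Fin n2 × Fin (n1 + 1)) ⊕
        (Fin n3 × Fin (n2 + 1) × Fin (n1 + 1)))) ℝ :=
  Matrix.of (Sum.elim
    (fun f => Sum.elim
      ((0 : Matrix (Fin n3 × Fin n2 × Fin (n1 + 1)) (Fin (n3 + 1) × Fin (n2 + 1) × Fin n1) ℝ) f)
      (Sum.elim
        ((-(diffMx n3 ⊗ₖ ((1 : Matrix (Fin n2) (Fin n2) ℝ) ⊗ₖ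
            (1 : Matrix (Fin (n1 + 1)) (Fin (n1 + 1)) ℝ)))) f)
        (((1 : Matrix (Fin n3) (Fin n3) ℝ) ⊗ₖ
            (diffMx n2 ⊗ₖ (1 : Matrix (Fin (n1 + 1)) (Fin (n1 + 1)) ℝ))) f)))
    (Sum.elim
      (fun f => Sum.elim
        ((diffMx n3 ⊗ₖ ((1 : Matrix (Fin (n2 + 1)) (Fin (n2 + 1)) ℝ) ⊗ₖ
            (1 : Matrix (Fin n1) (Fin n1) ℝ))) f)
        (Sum.elim
          ((0 : Matrix (Fin n3 × Fin (n2 + 1) × Fin n1)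
              (Fin (n3 + 1) × Fin n2 × Fin (n1 + 1)) ℝ) f)
          ((-((1 : Matrix (Fin n3) (Fin n3) ℝ) ⊗ₖ
              ((1 : Matrix (Fin (n2 + 1)) (Fin (n2 + 1)) ℝ) ⊗ₖ diffMx n1))) f)))
      (fun f => Sum.elim
        ((-((1 : Matrix (Fin (n3 + 1)) (Fin (n3 + 1)) ℝ) ⊗ₖ
            (diffMx n2 ⊗ₖ (1 : Matrix (Fin n1) (Fin n1) ℝ)))) f)
        (Sum.elim
          (((1 : Matrix (Fin (n3 + 1)) (Fin (n3 + 1)) ℝ) ⊗ₖ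
              ((1 : Matrix (Fin n2) (Fin n2) ℝ) ⊗ₖ diffMx n1)) f)
          ((0 : Matrix (Fin (n3 + 1) × Fin n2 × Fin n1)
              (Fin n3 × Fin (n2 + 1) × Fin (n1 + 1)) ℝ) f)))))

/-- The discrete divergence on a structured tensor grid, the transpose of the block
column `[I ⊗ I ⊗ G; I ⊗ G ⊗ I; G ⊗ I ⊗ I]` on the face/cell grid. -/
noncomputable def discreteDiv (n1 n2 n3 : ℕ) :
    Matrix (Fin n3 × Fin n2 × Fin n1)
      ((Fin n3 × Fin n2 × Fin (n1 + 1)) ⊕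
       ((Fin n3 × Fin (n2 + 1) × Fin n1) ⊕
        (Fin (n3 + 1) × Fin n2 × Fin n1))) ℝ :=
  Matrix.of fun c => Sum.elim
    (((1 : Matrix (Fin n3) (Fin n3) ℝ) ⊗ₖ
        ((1 : Matrix (Fin n2) (Fin n2) ℝ) ⊗ₖ diffMx n1)) c)
    (Sum.elim
      (((1 : Matrix (Fin n3) (Fin n3) ℝ) ⊗ₖ
          (diffMx n2 ⊗ₖ (1 : Matrix (Fin n1) (Fin n1) ℝ))) c)
      ((diffMx n3 ⊗ₖ
          ((1 : Matrix (Fin n2) (Fin n2) ℝ) ⊗ₖ (1 : Matrix (Fin n1) (Fin n1) ℝ))) c))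


lemma curlAux1 (n1 n2 n3 : ℕ) :
    ((1 : Matrix (Fin n3) (Fin n3) ℝ) ⊗ₖ (diffMx n2 ⊗ₖ (1 : Matrix (Fin n1) (Fin n1) ℝ))) *
      (diffMx n3 ⊗ₖ ((1 : Matrix (Fin (n2 + 1)) (Fin (n2 + 1)) ℝ) ⊗ₖ
        (1 : Matrix (Fin n1) (Fin n1) ℝ))) =
    (diffMx n3 ⊗ₖ ((1 : Matrix (Fin n2) (Fin n2) ℝ) ⊗ₖ (1 : Matrix (Fin n1) (Fin n1) ℝ))) *
      ((1 : Matrix (Fin (n3 + 1)) (Fin (n3 + 1)) ℝ) ⊗ₖ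
        (diffMx n2 ⊗ₖ (1 : Matrix (Fin n1) (Fin n1) ℝ))) := by
  simp only [← Matrix.mul_kronecker_mul, Matrix.one_mul, Matrix.mul_one]

lemma curlAux2 (n1 n2 n3 : ℕ) :
    ((1 : Matrix (Fin n3) (Fin n3) ℝ) ⊗ₖ ((1 : Matrix (Fin n2) (Fin n2) ℝ) ⊗ₖ diffMx n1)) *
      (diffMx n3 ⊗ₖ ((1 : Matrix (Fin n2) (Fin n2) ℝ) ⊗ₖ
        (1 : Matrix (Fin (n1 + 1)) (Fin (n1 + 1)) ℝ))) =
    (diffMx n3 ⊗ₖ ((1 : Matrix (Fin n2) (Fin n2) ℝ) ⊗ₖ (1 : Matrix (Fin n1) (Fin n1) ℝ))) *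
      ((1 : Matrix (Fin (n3 + 1)) (Fin (n3 + 1)) ℝ) ⊗ₖ
        ((1 : Matrix (Fin n2) (Fin n2) ℝ) ⊗ₖ diffMx n1)) := by
  simp only [← Matrix.mul_kronecker_mul, Matrix.one_mul, Matrix.mul_one]

lemma curlAux3 (n1 n2 n3 : ℕ) :
    ((1 : Matrix (Fin n3) (Fin n3) ℝ) ⊗ₖ ((1 : Matrix (Fin n2) (Fin n2) ℝ) ⊗ₖ diffMx n1)) *
      ((1 : Matrix (Fin n3) (Fin n3) ℝ) ⊗ₖ (diffMx n2 ⊗ₖ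
        (1 : Matrix (Fin (n1 + 1)) (Fin (n1 + 1)) ℝ))) =
    ((1 : Matrix (Fin n3) (Fin n3) ℝ) ⊗ₖ (diffMx n2 ⊗ₖ (1 : Matrix (Fin n1) (Fin n1) ℝ))) *
      ((1 : Matrix (Fin n3) (Fin n3) ℝ) ⊗ₖ
        ((1 : Matrix (Fin (n2 + 1)) (Fin (n2 + 1)) ℝ) ⊗ₖ diffMx n1)) := by
  simp only [← Matrix.mul_kronecker_mul, Matrix.one_mul, Matrix.mul_one]

/-- The discrete divergence of a discrete curl vanishes: `D · C = 0`. -/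
theorem discreteDiv_mul_discreteCurl (n1 n2 n3 : ℕ) :
    discreteDiv n1 n2 n3 * discreteCurl n1 n2 n3 = 0 := by
  ext c j
  rcases j with j | j | j
  · have h2 := congrFun (congrFun (curlAux1 n1 n2 n3) c) j
    simp only [Matrix.mul_apply] at h2
    simp only [Matrix.mul_apply, discreteDiv, discreteCurl, Matrix.of_apply,
      Fintype.sum_sum_type, Sum.elim_inl, Sum.elim_inr, Matrix.zero_apply, mul_zero,
      Finset.sum_const_zero, Matrix.neg_apply, mul_neg, Finset.sum_neg_distrib,
      zero_add, add_zero]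
    linarith [h2]
  · have h2 := congrFun (congrFun (curlAux2 n1 n2 n3) c) j
    simp only [Matrix.mul_apply] at h2
    simp only [Matrix.mul_apply, discreteDiv, discreteCurl, Matrix.of_apply,
      Fintype.sum_sum_type, Sum.elim_inl, Sum.elim_inr, Matrix.zero_apply, mul_zero,
      Finset.sum_const_zero, Matrix.neg_apply, mul_neg, Finset.sum_neg_distrib,
      zero_add, add_zero]
    linarith [h2]
  · have h2 := congrFun (congrFun (curlAux3 n1 n2 n3) c) j
    simp only [Matrix.mul_apply] at h2
    simp only [Matrix.mul_apply, discreteDiv, discreteCurl, Matrix.of_apply,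
      Fintype.sum_sum_type, Sum.elim_inl, Sum.elim_inr, Matrix.zero_apply, mul_zero,
      Finset.sum_const_zero, Matrix.neg_apply, mul_neg, Finset.sum_neg_distrib,
      zero_add, add_zero]
    linarith [h2]
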